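/- For m₁, m₂ > 0 and d = 2, the improper integral (1/2)∫_{ℝ²} (d²p/(2π)²) [ (m₁² − m₂²)/(|p|² + m₂²) − log( (|p|² + m₁²)/(|p|² + m₂²) ) ] converges and equals (1/(8π))( m₂² − m₁² + m₁² log(m₁²/m₂²) ). -/

import Mathlib

/-!
Write `a = m₁²`, `b = m₂²` and `y = (r² + a)/(r² + b)`. The integrand is the radial function
`y - 1 - log y ≥ 0`, and in polar coordinates `r (y - 1 - log y)` is the derivative of
`G r = ½ (r² + a) (log (r² + b) - log (r² + a))`, which tends to `(b - a)/2` at infinity.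
A nonnegative derivative of a function with a finite limit is integrable, with integral
`(b - a)/2 - G 0`; multiplying by the circumference factor `2π` gives the claim.
-/

open Real MeasureTheory Set Filter Topology

noncomputable def relEntropyIntegrand (a b r : ℝ) : ℝ :=
  (a - b) / (r ^ 2 + b) - log ((r ^ 2 + a) / (r ^ 2 + b))

noncomputable def relEntropyPrimitive (a b r : ℝ) : ℝ :=
  (1 / 2) * ((r ^ 2 + a) * (log (r ^ 2 + b) - log (r ^ 2 + a)))

section

variable {a b : ℝ}

lemma relEntropyIntegrand_nonneg (ha : 0 < a) (hb : 0 < b) (r : ℝ) :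
    0 ≤ relEntropyIntegrand a b r := by
  have hrb : 0 < r ^ 2 + b := by positivity
  have hratio : (a - b) / (r ^ 2 + b) = (r ^ 2 + a) / (r ^ 2 + b) - 1 := by
    field_simp; ring
  have := log_le_sub_one_of_pos (show 0 < (r ^ 2 + a) / (r ^ 2 + b) by positivity)
  rw [relEntropyIntegrand, hratio]
  linarith

lemma hasDerivAt_relEntropyPrimitive (ha : 0 < a) (hb : 0 < b) (r : ℝ) :
    HasDerivAt (relEntropyPrimitive a b) (r * relEntropyIntegrand a b r) r := by
  have hra : 0 < r ^ 2 + a := by positivity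
  have hrb : 0 < r ^ 2 + b := by positivity
  have hsq (c : ℝ) : HasDerivAt (fun s : ℝ => s ^ 2 + c) (2 * r) r := by
    simpa using (hasDerivAt_pow 2 r).add_const c
  refine (((hsq a).mul (((hsq b).log hrb.ne').sub ((hsq a).log hra.ne'))).const_mul
    (1 / 2 : ℝ)).congr_deriv ?_
  rw [Pi.sub_apply, relEntropyIntegrand, log_div hra.ne' hrb.ne']
  field_simp
  ring

lemma tendsto_relEntropyPrimitive_atTop (ha : 0 < a) (hb : 0 < b) :
    Tendsto (relEntropyPrimitive a b) atTop (𝓝 ((b - a) / 2)) := by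
  have hsq : Tendsto (fun r : ℝ => r ^ 2 + a) atTop atTop :=
    tendsto_atTop_add_const_right _ a (tendsto_pow_atTop two_ne_zero)
  have hlim := ((tendsto_mul_log_one_add_div_atTop (b - a)).comp hsq).const_mul (1 / 2)
  rw [show (b - a) / 2 = 1 / 2 * (b - a) by ring]
  refine hlim.congr' (Eventually.of_forall fun r => ?_)
  have hra : 0 < r ^ 2 + a := by positivity
  have hrb : 0 < r ^ 2 + b := by positivity
  rw [Function.comp_apply, relEntropyPrimitive, ← log_div hrb.ne' hra.ne']
  congr 3
  field_simp
  ring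

lemma integrableOn_mul_relEntropyIntegrand (ha : 0 < a) (hb : 0 < b) :
    IntegrableOn (fun r => r * relEntropyIntegrand a b r) (Ioi 0) :=
  integrableOn_Ioi_deriv_of_nonneg' (fun r _ => hasDerivAt_relEntropyPrimitive ha hb r)
    (fun r hr => mul_nonneg hr.le (relEntropyIntegrand_nonneg ha hb r))
    (tendsto_relEntropyPrimitive_atTop ha hb)

lemma integral_mul_relEntropyIntegrand (ha : 0 < a) (hb : 0 < b) :
    ∫ r in Ioi 0, r * relEntropyIntegrand a b r = (b - a + a * (log a - log b)) / 2 := by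
  rw [integral_Ioi_of_hasDerivAt_of_tendsto' (fun r _ => hasDerivAt_relEntropyPrimitive ha hb r)
    (integrableOn_mul_relEntropyIntegrand ha hb) (tendsto_relEntropyPrimitive_atTop ha hb),
    relEntropyPrimitive]
  ring_nf

lemma integrable_relEntropyIntegrand_norm (ha : 0 < a) (hb : 0 < b) :
    Integrable fun p : EuclideanSpace ℝ (Fin 2) => relEntropyIntegrand a b ‖p‖ := by
  rw [integrable_fun_norm_addHaar]
  simpa using integrableOn_mul_relEntropyIntegrand ha hb

lemma integral_relEntropyIntegrand_norm (ha : 0 < a) (hb : 0 < b) :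
    ∫ p : EuclideanSpace ℝ (Fin 2), relEntropyIntegrand a b ‖p‖
      = π * (b - a + a * (log a - log b)) := by
  rw [integral_fun_norm_addHaar]
  simp only [finrank_euclideanSpace, Fintype.card_fin, measureReal_def,
    EuclideanSpace.volume_ball_fin_two, ENNReal.ofReal_one, one_pow, one_mul,
    ENNReal.toReal_ofReal pi_nonneg, Nat.add_one_sub_one, pow_one, smul_eq_mul,
    integral_mul_relEntropyIntegrand ha hb, nsmul_eq_mul, Nat.cast_ofNat]
  ring

end

/-- The infinite-volume relative entropy density in two dimensions equals
`(1/(8π))(m₂² - m₁² + m₁² log(m₁²/m₂²))`. -/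
theorem relEntropy_density_two_dim (m₁ m₂ : ℝ) (h₁ : 0 < m₁) (h₂ : 0 < m₂) :
    Integrable (fun p : EuclideanSpace ℝ (Fin 2) =>
        (m₁ ^ 2 - m₂ ^ 2) / (‖p‖ ^ 2 + m₂ ^ 2)
          - Real.log ((‖p‖ ^ 2 + m₁ ^ 2) / (‖p‖ ^ 2 + m₂ ^ 2))) ∧
      (1 / 2) * ∫ p : EuclideanSpace ℝ (Fin 2), (1 / (2 * π) ^ 2) *
          ((m₁ ^ 2 - m₂ ^ 2) / (‖p‖ ^ 2 + m₂ ^ 2)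
            - Real.log ((‖p‖ ^ 2 + m₁ ^ 2) / (‖p‖ ^ 2 + m₂ ^ 2)))
        = (1 / (8 * π)) * (m₂ ^ 2 - m₁ ^ 2 + m₁ ^ 2 * Real.log (m₁ ^ 2 / m₂ ^ 2)) := by
  have ha : 0 < m₁ ^ 2 := by positivity
  have hb : 0 < m₂ ^ 2 := by positivity
  refine ⟨integrable_relEntropyIntegrand_norm ha hb, ?_⟩
  have hI := integral_relEntropyIntegrand_norm ha hb
  unfold relEntropyIntegrand at hI
  rw [integral_const_mul, hI, log_div ha.ne' hb.ne']
  field_simp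
  ring
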